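/- Let x ∈ ℝⁿ be such that the flow S_t x is defined and f(S_t x) ≠ 0 for all t ≥ 0, let B be a continuous symmetric-matrix-valued function along the forward orbit of x, and let M be a C¹ symmetric-matrix-valued function on a neighborhood of the forward orbit of x satisfying LM(S_t x) = −P_{S_t x}^T B(S_t x) P_{S_t x} for all t ≥ 0. Then the function t ↦ f(S_t x)^T M(S_t x) f(S_t x) / ‖f(S_t x)‖⁴ is constant on [0,∞). -/

import Mathlib

/-!
Contracting `LM` with `f` on both sides gives, along any trajectory,
`fᵀ (LM) f = ‖f‖⁴ · d/dt (fᵀ M f / ‖f‖⁴)`: the two correction terms of `LM` contribute exactly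
the derivative of `‖f‖⁻⁴`. Since `P f = 0`, the right-hand side `-Pᵀ B P` vanishes after
this contraction, so the quotient has zero right derivative on `[0, ∞)`.
-/

open Matrix Set Filter MeasureTheory

/-- Euclidean norm of a vector in `ℝⁿ`. -/
noncomputable def euclNorm {n : ℕ} (v : Fin n → ℝ) : ℝ := Real.sqrt (∑ i, v i ^ 2)

/-- Operator norm of a matrix induced by the Euclidean norm. -/
noncomputable def opn {n : ℕ} (A : Matrix (Fin n) (Fin n) ℝ) : ℝ :=
  ‖Matrix.toEuclideanCLM (𝕜 := ℝ) A‖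

/-- The projection `P_x = I - f(x)f(x)ᵀ/‖f(x)‖²` onto the hyperplane perpendicular to `f(x)`. -/
noncomputable def Pm {n : ℕ} (f : (Fin n → ℝ) → Fin n → ℝ) (x : Fin n → ℝ) :
    Matrix (Fin n) (Fin n) ℝ :=
  1 - (euclNorm (f x) ^ 2)⁻¹ • Matrix.vecMulVec (f x) (f x)

/-- The differential operator
`LM(x) = M′(x) + Df(x)ᵀM(x) + M(x)Df(x) - M(x)f(x)f(x)ᵀ(Df(x)+Df(x)ᵀ)/‖f(x)‖²
  - (Df(x)+Df(x)ᵀ)f(x)f(x)ᵀM(x)/‖f(x)‖²`,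
where the orbital derivative `M′(x)` has entries `∇M_ij(x) ⋅ f(x)`. -/
noncomputable def LMop {n : ℕ} (f : (Fin n → ℝ) → Fin n → ℝ)
    (Df M : (Fin n → ℝ) → Matrix (Fin n) (Fin n) ℝ) (x : Fin n → ℝ) :
    Matrix (Fin n) (Fin n) ℝ :=
  (Matrix.of fun i j => fderiv ℝ (fun y => M y i j) x (f x))
    + (Df x)ᵀ * M x + M x * Df x
    - (euclNorm (f x) ^ 2)⁻¹ • (M x * Matrix.vecMulVec (f x) (f x) * (Df x + (Df x)ᵀ))
    - (euclNorm (f x) ^ 2)⁻¹ • ((Df x + (Df x)ᵀ) * Matrix.vecMulVec (f x) (f x) * M x)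

theorem euclNorm_sq_eq_dotProduct {n : ℕ} (v : Fin n → ℝ) : euclNorm v ^ 2 = v ⬝ᵥ v := by
  rw [euclNorm, Real.sq_sqrt (Finset.sum_nonneg fun i _ => sq_nonneg (v i))]
  simp only [dotProduct, sq]

theorem Pm_mulVec_self {n : ℕ} (f : (Fin n → ℝ) → Fin n → ℝ) {x : Fin n → ℝ}
    (hfx : f x ≠ 0) : Pm f x *ᵥ f x = 0 := by
  have hρ : f x ⬝ᵥ f x ≠ 0 := fun h => hfx (dotProduct_self_eq_zero.mp h)
  rw [Pm, sub_mulVec, one_mulVec, smul_mulVec, vecMulVec_mulVec, op_smul_eq_smul,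
    euclNorm_sq_eq_dotProduct, smul_smul, inv_mul_cancel₀ hρ, one_smul, sub_self]

theorem dotProduct_LMop_mulVec {n : ℕ} (f : (Fin n → ℝ) → Fin n → ℝ)
    (Df M : (Fin n → ℝ) → Matrix (Fin n) (Fin n) ℝ) (y : Fin n → ℝ) :
    f y ⬝ᵥ LMop f Df M y *ᵥ f y =
      (Df y *ᵥ f y) ⬝ᵥ M y *ᵥ f y
        + f y ⬝ᵥ (of fun i j => fderiv ℝ (fun z => M z i j) y (f y)) *ᵥ f y
        + f y ⬝ᵥ M y *ᵥ (Df y *ᵥ f y)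
      - 4 * (f y ⬝ᵥ M y *ᵥ f y) * (f y ⬝ᵥ Df y *ᵥ f y) / (f y ⬝ᵥ f y) := by
  have hT : ∀ u, f y ⬝ᵥ (Df y)ᵀ *ᵥ u = (Df y *ᵥ f y) ⬝ᵥ u := fun u => by
    rw [dotProduct_mulVec, vecMul_transpose]
  simp only [LMop, sub_mulVec, add_mulVec, smul_mulVec, ← mulVec_mulVec, vecMulVec_mulVec,
    op_smul_eq_smul, mulVec_smul, dotProduct_sub, dotProduct_add, dotProduct_smul, hT,
    euclNorm_sq_eq_dotProduct, smul_eq_mul]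
  rw [dotProduct_comm (Df y *ᵥ f y) (f y)]
  ring

section Calculus

variable {ι : Type*} [Fintype ι] {s : Set ℝ} {t : ℝ}

theorem HasDerivWithinAt.dotProduct {u w : ℝ → ι → ℝ} {u' w' : ι → ℝ}
    (hu : HasDerivWithinAt u u' s t) (hw : HasDerivWithinAt w w' s t) :
    HasDerivWithinAt (fun r => u r ⬝ᵥ w r) (u' ⬝ᵥ w t + u t ⬝ᵥ w') s t := by
  simp only [_root_.dotProduct, ← Finset.sum_add_distrib]
  exact HasDerivWithinAt.fun_sum fun i _ =>
    (hasDerivWithinAt_pi.1 hu i).mul (hasDerivWithinAt_pi.1 hw i)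

theorem HasDerivWithinAt.mulVec {A : ℝ → Matrix ι ι ℝ} {A' : Matrix ι ι ℝ} {w : ℝ → ι → ℝ}
    {w' : ι → ℝ} (hA : ∀ i j, HasDerivWithinAt (fun r => A r i j) (A' i j) s t)
    (hw : HasDerivWithinAt w w' s t) :
    HasDerivWithinAt (fun r => A r *ᵥ w r) (A' *ᵥ w t + A t *ᵥ w') s t :=
  hasDerivWithinAt_pi.2 fun i => by
    simpa only [Matrix.mulVec, Pi.add_apply, ← dotProduct_add]
      using (hasDerivWithinAt_pi.2 (hA i)).dotProduct hw

theorem eq_of_hasDerivWithinAt_Ici_eq_zero {φ : ℝ → ℝ}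
    (hφ : ∀ r ≥ 0, HasDerivWithinAt φ 0 (Ici 0) r) (ht : 0 ≤ t) : φ t = φ 0 := by
  have hcont : ContinuousOn φ (Icc 0 t) := fun r hr =>
    (hφ r hr.1).continuousWithinAt.mono Icc_subset_Ici_self
  exact constant_of_has_deriv_right_zero hcont
    (fun r hr => (hφ r hr.1).mono (Ici_subset_Ici.mpr hr.1)) t (right_mem_Icc.mpr ht)

end Calculus

theorem hasDerivWithinAt_quadForm_div_euclNorm_pow_four {n : ℕ} {f : (Fin n → ℝ) → Fin n → ℝ}
    {Df M : (Fin n → ℝ) → Matrix (Fin n) (Fin n) ℝ} {g : ℝ → Fin n → ℝ} {s : Set ℝ} {t : ℝ}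
    (hDf : HasFDerivAt f (Df (g t)).mulVecLin.toContinuousLinearMap (g t))
    (hg : HasDerivWithinAt g (f (g t)) s t)
    (hM : ∀ i j, DifferentiableAt ℝ (fun y => M y i j) (g t)) (hfg : f (g t) ≠ 0) :
    HasDerivWithinAt (fun r => (f (g r) ⬝ᵥ M (g r) *ᵥ f (g r)) / euclNorm (f (g r)) ^ 4)
      ((f (g t) ⬝ᵥ LMop f Df M (g t) *ᵥ f (g t)) / euclNorm (f (g t)) ^ 4) s t := by
  have hρ : f (g t) ⬝ᵥ f (g t) ≠ 0 := fun h => hfg (dotProduct_self_eq_zero.mp h)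
  have hfg' : HasDerivWithinAt (fun r => f (g r)) (Df (g t) *ᵥ f (g t)) s t :=
    hDf.comp_hasDerivWithinAt t hg
  have hMg : ∀ i j, HasDerivWithinAt (fun r => M (g r) i j)
      (fderiv ℝ (fun y => M y i j) (g t) (f (g t))) s t := fun i j =>
    (hM i j).hasFDerivAt.comp_hasDerivWithinAt t hg
  have hquad := hfg'.dotProduct (HasDerivWithinAt.mulVec
    (A' := of fun i j => fderiv ℝ (fun y => M y i j) (g t) (f (g t))) hMg hfg')
  have hnorm4 := (hfg'.dotProduct hfg').pow 2
  simp only [fun v : Fin n → ℝ => show euclNorm v ^ 4 = (v ⬝ᵥ v) ^ 2 by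
    rw [← euclNorm_sq_eq_dotProduct]; ring]
  refine (hquad.div hnorm4 (pow_ne_zero 2 hρ)).congr_deriv ?_
  rw [dotProduct_LMop_mulVec, dotProduct_comm (Df (g t) *ᵥ f (g t)) (f (g t))]
  simp only [dotProduct_add, Pi.pow_apply]
  field_simp
  ring

theorem stmt19_general {n : ℕ} (f : (Fin n → ℝ) → Fin n → ℝ)
    (Df : (Fin n → ℝ) → Matrix (Fin n) (Fin n) ℝ)
    (hDf : ∀ y, HasFDerivAt f (LinearMap.toContinuousLinearMap ((Df y).mulVecLin)) y)
    (x : Fin n → ℝ)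
    -- `g t = S_t x` is the forward trajectory through `x`
    (g : ℝ → Fin n → ℝ) (hg0 : g 0 = x)
    (hg : ∀ t ≥ (0:ℝ), HasDerivWithinAt g (f (g t)) (Set.Ici 0) t)
    (hfg : ∀ t ≥ (0:ℝ), f (g t) ≠ 0)
    (B : (Fin n → ℝ) → Matrix (Fin n) (Fin n) ℝ)
    -- `M` is C¹ and symmetric-matrix-valued on an open neighborhood of the forward orbit
    (V : Set (Fin n → ℝ)) (hV : IsOpen V) (hgV : ∀ t ≥ (0:ℝ), g t ∈ V)
    (M : (Fin n → ℝ) → Matrix (Fin n) (Fin n) ℝ)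
    (hM : ∀ i j, ContDiffOn ℝ 1 (fun y => M y i j) V)
    -- `M` satisfies the PDE along the forward orbit of `x`
    (hPDE : ∀ t ≥ (0:ℝ), LMop f Df M (g t) = -((Pm f (g t))ᵀ * B (g t) * Pm f (g t))) :
    ∀ t ≥ (0:ℝ),
      (f (g t) ⬝ᵥ (M (g t)).mulVec (f (g t))) / euclNorm (f (g t)) ^ 4 =
        (f x ⬝ᵥ (M x).mulVec (f x)) / euclNorm (f x) ^ 4 := by
  intro t ht
  have hderiv : ∀ r ≥ (0:ℝ), HasDerivWithinAt
      (fun r => (f (g r) ⬝ᵥ M (g r) *ᵥ f (g r)) / euclNorm (f (g r)) ^ 4) 0 (Ici 0) r := by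
    intro r hr
    have hLM : f (g r) ⬝ᵥ LMop f Df M (g r) *ᵥ f (g r) = 0 := by
      rw [hPDE r hr, neg_mulVec, ← mulVec_mulVec, Pm_mulVec_self f (hfg r hr), mulVec_zero,
        dotProduct_neg, dotProduct_zero, neg_zero]
    have hM' : ∀ i j, DifferentiableAt ℝ (fun y => M y i j) (g r) := fun i j =>
      ((hM i j).differentiableOn one_ne_zero).differentiableAt (hV.mem_nhds (hgV r hr))
    simpa only [hLM, zero_div] using
      hasDerivWithinAt_quadForm_div_euclNorm_pow_four (hDf (g r)) (hg r hr) hM' (hfg r hr)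
  simpa only [hg0] using eq_of_hasDerivWithinAt_Ici_eq_zero hderiv ht

/-- if `M` is a C¹ symmetric-matrix-valued function with
`LM(S_t x) = −P_{S_t x}ᵀ B(S_t x) P_{S_t x}` along the forward orbit of `x`, then
`t ↦ f(S_t x)ᵀ M(S_t x) f(S_t x)/‖f(S_t x)‖⁴` is constant on `[0,∞)`. -/
theorem stmt19 {n : ℕ} (f : (Fin n → ℝ) → Fin n → ℝ)
    (Df : (Fin n → ℝ) → Matrix (Fin n) (Fin n) ℝ)
    (hf : ContDiff ℝ 1 f)
    (hDf : ∀ y, HasFDerivAt f (LinearMap.toContinuousLinearMap ((Df y).mulVecLin)) y)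
    (x : Fin n → ℝ)
    -- `g t = S_t x` is the forward trajectory through `x`
    (g : ℝ → Fin n → ℝ) (hg0 : g 0 = x)
    (hg : ∀ t ≥ (0:ℝ), HasDerivWithinAt g (f (g t)) (Set.Ici 0) t)
    (hfg : ∀ t ≥ (0:ℝ), f (g t) ≠ 0)
    -- `B` is continuous and symmetric-matrix-valued along the forward orbit of `x`
    (B : (Fin n → ℝ) → Matrix (Fin n) (Fin n) ℝ)
    (hBc : ∀ i j, ContinuousOn (fun y => B y i j) {y | ∃ t ≥ (0:ℝ), y = g t})
    (hBsym : ∀ t ≥ (0:ℝ), (B (g t))ᵀ = B (g t))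
    -- `M` is C¹ and symmetric-matrix-valued on an open neighborhood of the forward orbit
    (V : Set (Fin n → ℝ)) (hV : IsOpen V) (hgV : ∀ t ≥ (0:ℝ), g t ∈ V)
    (M : (Fin n → ℝ) → Matrix (Fin n) (Fin n) ℝ)
    (hM : ∀ i j, ContDiffOn ℝ 1 (fun y => M y i j) V)
    (hMsym : ∀ y ∈ V, (M y)ᵀ = M y)
    -- `M` satisfies the PDE along the forward orbit of `x`
    (hPDE : ∀ t ≥ (0:ℝ), LMop f Df M (g t) = -((Pm f (g t))ᵀ * B (g t) * Pm f (g t))) :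
    ∀ t ≥ (0:ℝ),
      (f (g t) ⬝ᵥ (M (g t)).mulVec (f (g t))) / euclNorm (f (g t)) ^ 4 =
        (f x ⬝ᵥ (M x).mulVec (f x)) / euclNorm (f x) ^ 4 :=
  stmt19_general f Df hDf x g hg0 hg hfg B V hV hgV M hM hPDE
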